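/- With notation as in the construction: let R = I × J be a standard rectangle and ℓ ≥ 1 with 2^{ℓ+1}|J| ≤ 1. Then there exists exactly one standard rectangle T = W × H intersecting R vertically with p_T ≠ p_R, W ⊂ I_{(ℓ)}, and |W| = 2^{-1}|I_{(ℓ)}|; moreover H = J^{(ℓ+1)}. -/

import Mathlib

/-!
The double rectangle `I_{(ℓ)} × J^{(ℓ+1)}` has area `2|R| = 2^{-2m-1}` and lies in the unit
square, so it contains exactly one point `q` of `P`, and `q ≠ p_R` because
`π₁(p_R) ∉ I_{(ℓ)}`. Taking `W` to be the dyadic half of `I_{(ℓ)}` containing `π₁(q)` and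
`H = J^{(ℓ+1)}` gives the rectangle. Conversely, any admissible `T = W' × H'` has
`|W'| = |W|`, hence `|H'| = |J^{(ℓ+1)}|`; since `H'` meets `J`, dyadic nesting forces
`H' = J^{(ℓ+1)}`. Then `p_T` lies in the double rectangle, so `p_T = q` and `W' = W`.
-/

open MeasureTheory
open scoped ENNReal

/-- A dyadic interval `[k·2^n, (k+1)·2^n)`. -/
def IsDyadicInterval (I : Set ℝ) : Prop :=
  ∃ k n : ℤ, I = Set.Ico ((k : ℝ) * 2 ^ n) (((k : ℝ) + 1) * 2 ^ n)

/-- An axis-parallel dyadic rectangle in the plane. -/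
def IsDyadicRect (R : Set (ℝ × ℝ)) : Prop :=
  ∃ I J : Set ℝ, IsDyadicInterval I ∧ IsDyadicInterval J ∧ R = I ×ˢ J

def unitSq : Set (ℝ × ℝ) := Set.Ico (0 : ℝ) 1 ×ˢ Set.Ico (0 : ℝ) 1

/-- `T = W × H` intersects `R = I × J` vertically: they intersect nontrivially,
neither contains the other, and `π₁(T) ⊊ π₁(R)`. -/
def VertInt (W H I J : Set ℝ) : Prop :=
  ((W ×ˢ H) ∩ (I ×ˢ J)).Nonempty ∧ ¬ (W ×ˢ H ⊆ I ×ˢ J) ∧ ¬ (I ×ˢ J ⊆ W ×ˢ H) ∧ W ⊂ I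

open Set

namespace ENNReal

lemma two_zpow_le_two_zpow_iff {m n : ℤ} : (2 : ℝ≥0∞) ^ m ≤ 2 ^ n ↔ m ≤ n := by
  rw [← coe_ofNat, ← coe_zpow two_ne_zero, ← coe_zpow two_ne_zero, coe_le_coe]
  exact zpow_le_zpow_iff_right₀ (by norm_num)

lemma two_zpow_add (m n : ℤ) : (2 : ℝ≥0∞) ^ (m + n) = 2 ^ m * 2 ^ n :=
  ENNReal.zpow_add two_ne_zero ofNat_ne_top m n

lemma ofReal_two_zpow (n : ℤ) : ENNReal.ofReal (2 ^ n) = 2 ^ n := by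
  rw [← NNReal.coe_ofNat, ← NNReal.coe_zpow, ofReal_coe_nnreal, coe_zpow two_ne_zero, coe_ofNat]

end ENNReal

lemma mem_Ico_dyadic_iff {x : ℝ} {k n : ℤ} :
    x ∈ Ico ((k : ℝ) * 2 ^ n) ((k + 1) * 2 ^ n) ↔ ⌊x / 2 ^ n⌋ = k := by
  have h : (0 : ℝ) < 2 ^ n := by positivity
  rw [Int.floor_eq_iff, le_div_iff₀ h, div_lt_iff₀ h, mem_Ico]

lemma floor_div_two_zpow_add (x : ℝ) (n : ℤ) (j : ℕ) :
    ⌊x / 2 ^ (n + j)⌋ = ⌊x / 2 ^ n⌋ / 2 ^ j := by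
  rw [zpow_add₀ two_ne_zero, zpow_natCast, ← div_div]
  exact_mod_cast Int.floor_div_natCast (x / 2 ^ n) (2 ^ j)

lemma volume_Ico_dyadic (k n : ℤ) :
    volume (Ico ((k : ℝ) * 2 ^ n) ((k + 1) * 2 ^ n)) = 2 ^ n := by
  rw [Real.volume_Ico, ← sub_mul, add_sub_cancel_left, one_mul, ENNReal.ofReal_two_zpow]

lemma isDyadicInterval_Ico_zero_one : IsDyadicInterval (Ico 0 1) :=
  ⟨0, 0, by simp⟩

lemma exists_isDyadicInterval_mem (x : ℝ) (n : ℤ) :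
    ∃ W, IsDyadicInterval W ∧ x ∈ W ∧ volume W = 2 ^ n :=
  ⟨_, ⟨⌊x / 2 ^ n⌋, n, rfl⟩, mem_Ico_dyadic_iff.2 rfl, volume_Ico_dyadic _ _⟩

lemma volume_prod_eq_mul {α β : Type*} [MeasureSpace α] [MeasureSpace β]
    [SigmaFinite (volume : Measure β)] (s : Set α) (t : Set β) :
    volume (s ×ˢ t) = volume s * volume t := by
  rw [Measure.volume_eq_prod, Measure.prod_prod]

lemma volume_prod_of_rescale {I J I' J' : Set ℝ} {a b e : ℤ}
    (hI' : volume I' = 2 ^ a * volume I) (hJ' : volume J' = 2 ^ b * volume J)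
    (hIJ : volume (I ×ˢ J) = 2 ^ e) : volume (I' ×ˢ J') = 2 ^ (a + b + e) := by
  rw [volume_prod_eq_mul, hI', hJ', ENNReal.two_zpow_add, ENNReal.two_zpow_add, ← hIJ,
    volume_prod_eq_mul]
  ring

namespace IsDyadicInterval

variable {I I' : Set ℝ}

lemma exists_volume_eq (hI : IsDyadicInterval I) : ∃ n : ℤ, volume I = 2 ^ n := by
  obtain ⟨k, n, rfl⟩ := hI
  exact ⟨n, volume_Ico_dyadic k n⟩

lemma volume_ne_zero (hI : IsDyadicInterval I) : volume I ≠ 0 := by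
  obtain ⟨n, hn⟩ := hI.exists_volume_eq
  exact hn ▸ (ENNReal.zpow_pos two_ne_zero ENNReal.ofNat_ne_top n).ne'

lemma volume_ne_top (hI : IsDyadicInterval I) : volume I ≠ ∞ := by
  obtain ⟨n, hn⟩ := hI.exists_volume_eq
  exact hn ▸ ENNReal.zpow_ne_top two_ne_zero ENNReal.ofNat_ne_top n

lemma nonempty (hI : IsDyadicInterval I) : I.Nonempty :=
  nonempty_of_measure_ne_zero hI.volume_ne_zero

lemma subset_of_volume_le (hI : IsDyadicInterval I) (hI' : IsDyadicInterval I')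
    (hvol : volume I ≤ volume I') {x : ℝ} (hxI : x ∈ I) (hxI' : x ∈ I') : I ⊆ I' := by
  obtain ⟨k, n, rfl⟩ := hI
  obtain ⟨k', n', rfl⟩ := hI'
  rw [volume_Ico_dyadic, volume_Ico_dyadic, ENNReal.two_zpow_le_two_zpow_iff] at hvol
  obtain ⟨j, rfl⟩ := Int.le.dest hvol
  intro y hy
  rw [mem_Ico_dyadic_iff] at hxI hxI' hy ⊢
  rw [floor_div_two_zpow_add, hy, ← hxI, ← floor_div_two_zpow_add, hxI']

lemma eq_of_volume_eq (hI : IsDyadicInterval I) (hI' : IsDyadicInterval I')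
    (hvol : volume I = volume I') {x : ℝ} (hxI : x ∈ I) (hxI' : x ∈ I') : I = I' :=
  (hI.subset_of_volume_le hI' hvol.le hxI hxI').antisymm
    (hI'.subset_of_volume_le hI hvol.ge hxI' hxI)

lemma exists_half (hI : IsDyadicInterval I) {x : ℝ} (hx : x ∈ I) :
    ∃ W, IsDyadicInterval W ∧ x ∈ W ∧ W ⊆ I ∧ volume W = 2⁻¹ * volume I := by
  obtain ⟨n, hn⟩ := hI.exists_volume_eq
  obtain ⟨W, hW, hxW, hWvol⟩ := exists_isDyadicInterval_mem x (n - 1)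
  have hhalf : volume W = 2⁻¹ * volume I := by
    rw [hWvol, hn, sub_eq_neg_add, ENNReal.two_zpow_add, zpow_neg_one]
  refine ⟨W, hW, hxW, hW.subset_of_volume_le hI ?_ hxW hx, hhalf⟩
  rw [hhalf]
  exact mul_le_of_le_one_left zero_le (ENNReal.inv_le_one.2 one_le_two)

lemma subset_Ico_zero_one (hI : IsDyadicInterval I) (hvol : volume I ≤ 1) {x : ℝ}
    (hxI : x ∈ I) (hx : x ∈ Ico 0 1) : I ⊆ Ico 0 1 := by
  refine hI.subset_of_volume_le isDyadicInterval_Ico_zero_one ?_ hxI hx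
  rwa [Real.volume_Ico, sub_zero, ENNReal.ofReal_one]

lemma not_subset_of_volume_eq_two_zpow_mul (hI : IsDyadicInterval I) {n : ℤ} (hn : 0 < n)
    (hI' : volume I' = 2 ^ n * volume I) : ¬ I' ⊆ I := fun h => by
  obtain ⟨k, hk⟩ := hI.exists_volume_eq
  have hle := measure_mono (μ := volume) h
  rw [hI', hk, ← ENNReal.two_zpow_add, ENNReal.two_zpow_le_two_zpow_iff] at hle
  omega

lemma eq_of_volume_prod_eq {W W' : Set ℝ} (hI : IsDyadicInterval I) (hI' : IsDyadicInterval I')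
    (hW : IsDyadicInterval W) (hWW' : volume W' = volume W)
    (hvol : volume (W' ×ˢ I') = volume (W ×ˢ I)) {y : ℝ} (hyI : y ∈ I) (hyI' : y ∈ I') :
    I' = I := by
  refine hI'.eq_of_volume_eq hI ?_ hyI' hyI
  rwa [volume_prod_eq_mul, volume_prod_eq_mul, hWW',
    ENNReal.mul_right_inj hW.volume_ne_zero hW.volume_ne_top] at hvol

end IsDyadicInterval

lemma vertInt_of_subset {W H I J : Set ℝ} {x : ℝ} (hW : W.Nonempty) (hJ : J.Nonempty)
    (hWI : W ⊆ I) (hxI : x ∈ I) (hxW : x ∉ W) (hJH : J ⊆ H) (hHJ : ¬ H ⊆ J) :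
    VertInt W H I J := by
  obtain ⟨w, hw⟩ := hW
  obtain ⟨y, hy⟩ := hJ
  obtain ⟨y', hy'H, hy'J⟩ := not_subset.1 hHJ
  exact ⟨⟨(w, y), ⟨hw, hJH hy⟩, ⟨hWI hw, hy⟩⟩, fun h => hy'J (h (mk_mem_prod hw hy'H)).2,
    fun h => hxW (h (mk_mem_prod hxI hy)).1, hWI.ssubset_of_not_subset fun h => hxW (h hxI)⟩

theorem stmt13_general (m : ℕ) (P : Finset (ℝ × ℝ))
    (hP1 : ∀ R : Set (ℝ × ℝ), IsDyadicRect R → R ⊆ unitSq →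
      volume R = (2 : ℝ≥0∞) ^ (-(2 * (m : ℤ)) - 1) → ∃! q, q ∈ P ∧ q ∈ R)
    (I J : Set ℝ) (hJ : IsDyadicInterval J)
    (hRsub : I ×ˢ J ⊆ unitSq)
    (hRvol : volume (I ×ˢ J) = (2 : ℝ≥0∞) ^ (-(2 * (m : ℤ)) - 2))
    (p : ℝ × ℝ) (hpR : p ∈ I ×ˢ J)
    (ℓ : ℕ)
    (hsmall : (2 : ℝ≥0∞) ^ ((ℓ : ℤ) + 1) * volume J ≤ 1)
    (Iℓ : Set ℝ) (hIℓ : IsDyadicInterval Iℓ) (hIℓI : Iℓ ⊆ I)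
    (hIℓvol : volume Iℓ = (2 : ℝ≥0∞) ^ (-(ℓ : ℤ)) * volume I)
    (hIℓp : p.1 ∉ Iℓ)
    (Jup : Set ℝ) (hJup : IsDyadicInterval Jup) (hJJup : J ⊆ Jup)
    (hJupvol : volume Jup = (2 : ℝ≥0∞) ^ ((ℓ : ℤ) + 1) * volume J) :
    ∃ W H : Set ℝ,
      (IsDyadicInterval W ∧ IsDyadicInterval H ∧ W ×ˢ H ⊆ unitSq ∧
        volume (W ×ˢ H) = (2 : ℝ≥0∞) ^ (-(2 * (m : ℤ)) - 2) ∧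
        (∃ q ∈ P, q ∈ W ×ˢ H ∧ q ≠ p) ∧
        VertInt W H I J ∧ W ⊆ Iℓ ∧ volume W = 2⁻¹ * volume Iℓ) ∧
      H = Jup ∧
      ∀ W' H' : Set ℝ,
        (IsDyadicInterval W' ∧ IsDyadicInterval H' ∧ W' ×ˢ H' ⊆ unitSq ∧
          volume (W' ×ˢ H') = (2 : ℝ≥0∞) ^ (-(2 * (m : ℤ)) - 2) ∧
          (∃ q ∈ P, q ∈ W' ×ˢ H' ∧ q ≠ p) ∧
          VertInt W' H' I J ∧ W' ⊆ Iℓ ∧ volume W' = 2⁻¹ * volume Iℓ) →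
        W' ×ˢ H' = W ×ˢ H := by
  obtain ⟨y, hy⟩ := hJ.nonempty
  have hI01 : I ⊆ Ico 0 1 := fun x hx => (hRsub (mk_mem_prod hx hy)).1
  have hJup01 : Jup ⊆ Ico 0 1 :=
    hJup.subset_Ico_zero_one (hJupvol ▸ hsmall) (hJJup hy) (hRsub (mk_mem_prod hpR.1 hy)).2
  have hdouble : volume (Iℓ ×ˢ Jup) = 2 ^ (-(2 * (m : ℤ)) - 1) :=
    (volume_prod_of_rescale hIℓvol hJupvol hRvol).trans (by congr 1; ring)
  obtain ⟨q, ⟨hqP, hqD⟩, hq_unique⟩ := hP1 _ ⟨Iℓ, Jup, hIℓ, hJup, rfl⟩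
    (prod_mono (hIℓI.trans hI01) hJup01) hdouble
  obtain ⟨W, hW, hqW, hWIℓ, hWvol⟩ := hIℓ.exists_half hqD.1
  have hT : volume (W ×ˢ Jup) = 2 ^ (-(2 * (m : ℤ)) - 2) :=
    (volume_prod_of_rescale (a := -1) (b := 0) (by rwa [zpow_neg_one])
      (by rw [zpow_zero, one_mul]) hdouble).trans (by congr 1; ring)
  refine ⟨W, Jup, ⟨hW, hJup, prod_mono (hWIℓ.trans (hIℓI.trans hI01)) hJup01, hT,
    ⟨q, hqP, ⟨hqW, hqD.2⟩, fun h => hIℓp (h ▸ hqD.1)⟩,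
    vertInt_of_subset ⟨_, hqW⟩ ⟨y, hy⟩ (hWIℓ.trans hIℓI) hpR.1 (fun h => hIℓp (hWIℓ h)) hJJup
      (hJ.not_subset_of_volume_eq_two_zpow_mul (by omega) hJupvol), hWIℓ, hWvol⟩, rfl, ?_⟩
  rintro W' H' ⟨hW', hH', -, hT', ⟨q', hq'P, hq'T, -⟩, ⟨⟨z, hzT, hzR⟩, -⟩, hW'Iℓ, hW'vol⟩
  have hW'W : volume W' = volume W := hW'vol.trans hWvol.symm
  obtain rfl : H' = Jup :=
    hJup.eq_of_volume_prod_eq hH' hW hW'W (hT'.trans hT.symm) (hJJup hzR.2) hzT.2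
  obtain rfl : q' = q := hq_unique q' ⟨hq'P, hW'Iℓ hq'T.1, hq'T.2⟩
  rw [hW'.eq_of_volume_eq hW hW'W hq'T.1 hqW]

/-- Lemma (findMaximalRectangles): for a standard rectangle `R = I × J` and `ℓ ≥ 1`
with `2^{ℓ+1}|J| ≤ 1`, there is exactly one standard rectangle `T = W × H`
intersecting `R` vertically with `p_T ≠ p_R`, `W ⊂ I_{(ℓ)}` and `|W| = 2^{-1}|I_{(ℓ)}|`;
moreover `H = J^{(ℓ+1)}`. -/
theorem stmt13 (m : ℕ) (P : Finset (ℝ × ℝ))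
    (hPsub : (↑P : Set (ℝ × ℝ)) ⊆ unitSq)
    (hP1 : ∀ R : Set (ℝ × ℝ), IsDyadicRect R → R ⊆ unitSq →
      volume R = (2 : ℝ≥0∞) ^ (-(2 * (m : ℤ)) - 1) → ∃! q, q ∈ P ∧ q ∈ R)
    (hP2 : ∀ p ∈ P, ∀ q ∈ P, p ≠ q → ∀ R : Set (ℝ × ℝ), IsDyadicRect R →
      p ∈ R → q ∈ R → (2 : ℝ≥0∞) ^ (-(2 * (m : ℤ))) ≤ volume R)
    (I J : Set ℝ) (hI : IsDyadicInterval I) (hJ : IsDyadicInterval J)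
    (hRsub : I ×ˢ J ⊆ unitSq)
    (hRvol : volume (I ×ˢ J) = (2 : ℝ≥0∞) ^ (-(2 * (m : ℤ)) - 2))
    (p : ℝ × ℝ) (hpP : p ∈ P) (hpR : p ∈ I ×ˢ J)
    (ℓ : ℕ) (hℓ : 1 ≤ ℓ)
    (hsmall : (2 : ℝ≥0∞) ^ ((ℓ : ℤ) + 1) * volume J ≤ 1)
    (Iℓ : Set ℝ) (hIℓ : IsDyadicInterval Iℓ) (hIℓI : Iℓ ⊆ I)
    (hIℓvol : volume Iℓ = (2 : ℝ≥0∞) ^ (-(ℓ : ℤ)) * volume I)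
    (hIℓp : p.1 ∉ Iℓ)
    (hIℓpar : ∃ Ihat : Set ℝ, IsDyadicInterval Ihat ∧ Iℓ ⊆ Ihat ∧
      volume Ihat = 2 * volume Iℓ ∧ p.1 ∈ Ihat)
    (Jup : Set ℝ) (hJup : IsDyadicInterval Jup) (hJJup : J ⊆ Jup)
    (hJupvol : volume Jup = (2 : ℝ≥0∞) ^ ((ℓ : ℤ) + 1) * volume J) :
    ∃ W H : Set ℝ,
      (IsDyadicInterval W ∧ IsDyadicInterval H ∧ W ×ˢ H ⊆ unitSq ∧
        volume (W ×ˢ H) = (2 : ℝ≥0∞) ^ (-(2 * (m : ℤ)) - 2) ∧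
        (∃ q ∈ P, q ∈ W ×ˢ H ∧ q ≠ p) ∧
        VertInt W H I J ∧ W ⊆ Iℓ ∧ volume W = 2⁻¹ * volume Iℓ) ∧
      H = Jup ∧
      ∀ W' H' : Set ℝ,
        (IsDyadicInterval W' ∧ IsDyadicInterval H' ∧ W' ×ˢ H' ⊆ unitSq ∧
          volume (W' ×ˢ H') = (2 : ℝ≥0∞) ^ (-(2 * (m : ℤ)) - 2) ∧
          (∃ q ∈ P, q ∈ W' ×ˢ H' ∧ q ≠ p) ∧
          VertInt W' H' I J ∧ W' ⊆ Iℓ ∧ volume W' = 2⁻¹ * volume Iℓ) →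
        W' ×ˢ H' = W ×ˢ H :=
  stmt13_general m P hP1 I J hJ hRsub hRvol p hpR ℓ hsmall Iℓ hIℓ hIℓI hIℓvol hIℓp Jup hJup hJJup
    hJupvol
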